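/- For every k ∈ ℂ such that (k/a)² + 1 is not a negative real number and ξ(k) − ω(k)⁴ ≠ 0, one has R(−conj(k)) = conj(R(k)) and T(−conj(k)) = conj(T(k)), where conj denotes complex conjugation. In particular, for k = iκ with 0 < κ < a and ξ(iκ) ≠ ω(iκ)⁴, the values R(iκ) and T(iκ) are real. -/

import Mathlib

open Complex

/-- `ω(k) = k/a + ((k/a)² + 1)^{1/2}` with the principal branch of the square root. -/
noncomputable def omg (a : ℝ) (k : ℂ) : ℂ :=
  k / (a : ℂ) + ((k / (a : ℂ)) ^ 2 + 1) ^ ((1 : ℂ) / 2)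

/-- `ξ(k) = exp(i·a·b·(ω(k) + 1/ω(k)))`. -/
noncomputable def xi (a b : ℝ) (k : ℂ) : ℂ :=
  Complex.exp (Complex.I * (a : ℂ) * (b : ℂ) * (omg a k + 1 / omg a k))

/-- Right reflection coefficient of the block potential `−a²·χ_{[−b,0]}`. -/
noncomputable def Rcoef (a b : ℝ) (k : ℂ) : ℂ :=
  omg a k ^ 2 * (1 - xi a b k) / (xi a b k - omg a k ^ 4)

/-- Left reflection coefficient of the block potential `−a²·χ_{[−b,0]}`. -/
noncomputable def Lcoef (a b : ℝ) (k : ℂ) : ℂ :=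
  Rcoef a b k * Complex.exp (-Complex.I * (a : ℂ) * (b : ℂ) * (omg a k - 1 / omg a k))

/-- Transmission coefficient of the block potential `−a²·χ_{[−b,0]}`. -/
noncomputable def Tcoef (a b : ℝ) (k : ℂ) : ℂ :=
  (1 - omg a k ^ 4) / (xi a b k - omg a k ^ 4) * Complex.exp (Complex.I * (a : ℂ) * (b : ℂ) / omg a k)

/-- The block (well) potential `V = −a²·χ_{[−b,0]}`, complex-valued. -/
noncomputable def Vblock (a b : ℝ) (x : ℝ) : ℂ :=
  if -b ≤ x ∧ x ≤ 0 then -(a : ℂ) ^ 2 else 0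

/-!
Off the branch cut the principal square root commutes with conjugation, and
`((k/a)² + 1)^{1/2} - k/a = 1/ω(k)`, so `ω(-k̄) = 1/conj ω(k)`. Since `i a b` is purely
imaginary this gives `ξ(-k̄) = 1/conj ξ(k)`, and `R`, `T` are invariant under inverting both
`ω` and `ξ` (up to the phase `exp(i a b/ω)` in `T`, which absorbs the extra factor `ξ`).
For `k = iκ` we have `-k̄ = k`, and `(iκ/a)² + 1 = 1 - κ²/a² > 0` lies off the cut.
-/

section InversionInvariance

variable {K : Type*} [Field K]

theorem sq_mul_one_sub_div_inv_inv {w x : K} (hw : w ≠ 0) (hx : x ≠ 0) :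
    w⁻¹ ^ 2 * (1 - x⁻¹) / (x⁻¹ - w⁻¹ ^ 4) = w ^ 2 * (1 - x) / (x - w ^ 4) := by
  rw [← mul_div_mul_right _ _ (neg_ne_zero.mpr (mul_ne_zero hx (pow_ne_zero 4 hw)))]
  congr 1 <;> field_simp <;> ring

theorem one_sub_pow_four_div_inv_inv {w x : K} (hw : w ≠ 0) (hx : x ≠ 0) :
    (1 - w⁻¹ ^ 4) / (x⁻¹ - w⁻¹ ^ 4) = (1 - w ^ 4) / (x - w ^ 4) * x := by
  rw [div_mul_eq_mul_div,
    ← mul_div_mul_right _ _ (neg_ne_zero.mpr (mul_ne_zero hx (pow_ne_zero 4 hw)))]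
  congr 1 <;> field_simp <;> ring

end InversionInvariance

theorem cpow_one_half_conj {z : ℂ} (hz : z.arg ≠ Real.pi) :
    (starRingEnd ℂ z) ^ ((1 : ℂ) / 2) = starRingEnd ℂ (z ^ ((1 : ℂ) / 2)) := by
  rw [conj_cpow _ _ hz, map_div₀, map_one, map_ofNat]

theorem arg_ne_pi_of_ne_neg_real {z : ℂ} (hz : ¬ ∃ r : ℝ, r < 0 ∧ z = (r : ℂ)) :
    z.arg ≠ Real.pi := by
  intro hπ
  obtain ⟨hre, him⟩ := arg_eq_pi_iff.mp hπ
  exact hz ⟨z.re, hre, Complex.ext (by simp) (by simp [him])⟩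

theorem omg_mul_sqrt_sub (a : ℝ) (k : ℂ) :
    omg a k * (((k / (a : ℂ)) ^ 2 + 1) ^ ((1 : ℂ) / 2) - k / (a : ℂ)) = 1 := by
  have hsq : (((k / (a : ℂ)) ^ 2 + 1) ^ ((1 : ℂ) / 2)) ^ 2 = (k / (a : ℂ)) ^ 2 + 1 := by
    rw [one_div, cpow_ofNat_inv_pow]
  unfold omg
  linear_combination hsq

theorem omg_ne_zero (a : ℝ) (k : ℂ) : omg a k ≠ 0 :=
  left_ne_zero_of_mul_eq_one (omg_mul_sqrt_sub a k)

theorem omg_neg_conj (a : ℝ) {k : ℂ} (hk : ((k / (a : ℂ)) ^ 2 + 1).arg ≠ Real.pi) :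
    omg a (-starRingEnd ℂ k) = (starRingEnd ℂ (omg a k))⁻¹ := by
  have hsq : (-starRingEnd ℂ k / (a : ℂ)) ^ 2 + 1 = starRingEnd ℂ ((k / (a : ℂ)) ^ 2 + 1) := by
    simp only [map_add, map_pow, map_div₀, conj_ofReal, map_one]
    ring
  rw [← map_inv₀, inv_eq_of_mul_eq_one_right (omg_mul_sqrt_sub a k), omg, hsq,
    cpow_one_half_conj hk, map_sub, map_div₀, conj_ofReal]
  ring

theorem xi_neg_conj (a b : ℝ) {k : ℂ} (hk : ((k / (a : ℂ)) ^ 2 + 1).arg ≠ Real.pi) :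
    xi a b (-starRingEnd ℂ k) = (starRingEnd ℂ (xi a b k))⁻¹ := by
  rw [xi, xi, ← exp_conj, ← exp_neg, omg_neg_conj a hk]
  congr 1
  simp only [one_div, inv_inv, map_add, map_mul, map_inv₀, conj_I, conj_ofReal]
  ring

theorem Rcoef_neg_conj (a b : ℝ) {k : ℂ} (hk : ((k / (a : ℂ)) ^ 2 + 1).arg ≠ Real.pi) :
    Rcoef a b (-starRingEnd ℂ k) = starRingEnd ℂ (Rcoef a b k) := by
  rw [Rcoef, Rcoef, omg_neg_conj a hk, xi_neg_conj a b hk,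
    sq_mul_one_sub_div_inv_inv (by simpa using omg_ne_zero a k) (by simp [xi, exp_ne_zero])]
  simp only [map_div₀, map_mul, map_sub, map_one, map_pow]

theorem Tcoef_neg_conj (a b : ℝ) {k : ℂ} (hk : ((k / (a : ℂ)) ^ 2 + 1).arg ≠ Real.pi) :
    Tcoef a b (-starRingEnd ℂ k) = starRingEnd ℂ (Tcoef a b k) := by
  have hω : starRingEnd ℂ (omg a k) ≠ 0 := by simpa using omg_ne_zero a k
  have hphase : starRingEnd ℂ (xi a b k) * exp (I * a * b / (starRingEnd ℂ (omg a k))⁻¹) =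
      starRingEnd ℂ (exp (I * a * b / omg a k)) := by
    rw [xi, ← exp_conj, ← exp_conj, ← exp_add]
    congr 1
    simp only [map_add, map_mul, map_div₀, map_one, conj_I, conj_ofReal]
    field_simp
    ring
  rw [Tcoef, Tcoef, omg_neg_conj a hk, xi_neg_conj a b hk,
    one_sub_pow_four_div_inv_inv hω (by simp [xi, exp_ne_zero]), mul_assoc, hphase]
  simp only [map_mul, map_div₀, map_sub, map_one, map_pow]

theorem neg_conj_I_mul_ofReal (κ : ℝ) : -starRingEnd ℂ (I * κ) = I * κ := by
  simp

theorem arg_I_mul_div_sq_add_one_ne_pi {a κ : ℝ} (hκ : 0 < κ) (hκa : κ < a) :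
    ((I * κ / (a : ℂ)) ^ 2 + 1).arg ≠ Real.pi := by
  have ha : (a : ℂ) ≠ 0 := ofReal_ne_zero.mpr (by linarith)
  have hval : (I * κ / (a : ℂ)) ^ 2 + 1 = ((1 - (κ / a) ^ 2 : ℝ) : ℂ) := by
    push_cast
    field_simp
    rw [I_sq]
    ring
  have hpos : 0 < 1 - (κ / a) ^ 2 := by
    have : κ / a < 1 := (div_lt_one (by linarith)).mpr hκa
    nlinarith [div_pos hκ (show 0 < a by linarith)]
  rw [hval, arg_ofReal_of_nonneg hpos.le]
  exact Real.pi_ne_zero.symm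

theorem R_T_conj_symm_and_real_general (a b : ℝ) :
    (∀ k : ℂ, (¬ ∃ r : ℝ, r < 0 ∧ (k / (a : ℂ)) ^ 2 + 1 = (r : ℂ)) →
      xi a b k - omg a k ^ 4 ≠ 0 →
      Rcoef a b (-(starRingEnd ℂ) k) = (starRingEnd ℂ) (Rcoef a b k) ∧
      Tcoef a b (-(starRingEnd ℂ) k) = (starRingEnd ℂ) (Tcoef a b k)) ∧
    (∀ κ : ℝ, 0 < κ → κ < a →
      xi a b (Complex.I * (κ : ℂ)) ≠ omg a (Complex.I * (κ : ℂ)) ^ 4 →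
      (Rcoef a b (Complex.I * (κ : ℂ))).im = 0 ∧
      (Tcoef a b (Complex.I * (κ : ℂ))).im = 0) := by
  refine ⟨fun k hk _ => ⟨Rcoef_neg_conj a b (arg_ne_pi_of_ne_neg_real hk),
    Tcoef_neg_conj a b (arg_ne_pi_of_ne_neg_real hk)⟩, fun κ hκ hκa _ => ?_⟩
  have hk := arg_I_mul_div_sq_add_one_ne_pi hκ hκa
  have hR := Rcoef_neg_conj a b hk
  have hT := Tcoef_neg_conj a b hk
  rw [neg_conj_I_mul_ofReal] at hR hT
  exact ⟨conj_eq_iff_im.mp hR.symm, conj_eq_iff_im.mp hT.symm⟩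

/-- Symmetry of `R` and `T` under `k ↦ −conj k` away from the branch cut; in
particular `R(iκ)` and `T(iκ)` are real for `0 < κ < a`. -/
theorem R_T_conj_symm_and_real (a b : ℝ) (ha : 0 < a) (hb : 0 < b) :
    (∀ k : ℂ, (¬ ∃ r : ℝ, r < 0 ∧ (k / (a : ℂ)) ^ 2 + 1 = (r : ℂ)) →
      xi a b k - omg a k ^ 4 ≠ 0 →
      Rcoef a b (-(starRingEnd ℂ) k) = (starRingEnd ℂ) (Rcoef a b k) ∧
      Tcoef a b (-(starRingEnd ℂ) k) = (starRingEnd ℂ) (Tcoef a b k)) ∧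
    (∀ κ : ℝ, 0 < κ → κ < a →
      xi a b (Complex.I * (κ : ℂ)) ≠ omg a (Complex.I * (κ : ℂ)) ^ 4 →
      (Rcoef a b (Complex.I * (κ : ℂ))).im = 0 ∧
      (Tcoef a b (Complex.I * (κ : ℂ))).im = 0) :=
  R_T_conj_symm_and_real_general a b
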